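/- Let n ≥ 3 and let x_i : ℂ^i → ℂ^{i+1} and y_i : ℂ^{i+1} → ℂ^i, for 1 ≤ i ≤ n−2, be linear maps satisfying x_j ∘ y_j = y_{j+1} ∘ x_{j+1} (as maps ℂ^{j+1} → ℂ^{j+1}) for all 1 ≤ j ≤ n−3. Then for all indices 1 ≤ i < k ≤ n−2 and every v ∈ ker x_k, one has x_i ( y_i ( y_{i+1} ( ⋯ ( y_{k−1}(v) ) ⋯ ) ) ) = 0; that is, the composite x_i ∘ y_i ∘ y_{i+1} ∘ ⋯ ∘ y_{k−1} vanishes on ker x_k. Consequently, the graded subspace with component ker x_k at vertex k and component y_i∘⋯∘y_{k−1}(ker x_k) at each vertex i < k is invariant under all the maps x_i, y_i. -/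

import Mathlib

/-! For `v ∈ ker x_k`, the relation `x_{k−1} y_{k−1} = y_k x_k` gives `x_{k−1}(y_{k−1} v) = 0`,
so `y_{k−1} v ∈ ker x_{k−1}` and the same step can be repeated down to vertex `i`. The
invariance under `y_i` is then just `y_i ∘ (y_{i+1} ∘ ⋯ ∘ y_{k−1}) = y_i ∘ ⋯ ∘ y_{k−1}`,
up to reindexing `ℂ^{(i+1)+e} ≅ ℂ^{i+(e+1)}`. -/

/-- The composite `y_i ∘ y_{i+1} ∘ ⋯ ∘ y_{i+d−1} : ℂ^{i+d} → ℂ^i` of the downward stem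
maps (equal to `id` when `d = 0`). -/
noncomputable def yChain (y : ∀ i : ℕ, (Fin (i+1) → ℂ) →ₗ[ℂ] (Fin i → ℂ)) (i : ℕ) :
    ∀ d : ℕ, (Fin (i + d) → ℂ) →ₗ[ℂ] (Fin i → ℂ)
  | 0 => LinearMap.id
  | d + 1 => (yChain y i d).comp (y (i + d))

section Reindex

variable {R M : Type*} [Semiring R] [AddCommMonoid M] [Module R M]

theorem funCongrLeft_finCongr_comm_up (x : ∀ i : ℕ, (Fin i → M) →ₗ[R] (Fin (i+1) → M))
    {a b : ℕ} (h : b = a) (v : Fin a → M) :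
    x b (LinearEquiv.funCongrLeft R M (finCongr h) v) =
      LinearEquiv.funCongrLeft R M (finCongr (congrArg (· + 1) h)) (x a v) := by
  subst h
  simp [finCongr_refl]

theorem funCongrLeft_finCongr_comm_down (y : ∀ i : ℕ, (Fin (i+1) → M) →ₗ[R] (Fin i → M))
    {a b : ℕ} (h : b = a) (v : Fin (a+1) → M) :
    y b (LinearEquiv.funCongrLeft R M (finCongr (congrArg (· + 1) h)) v) =
      LinearEquiv.funCongrLeft R M (finCongr h) (y a v) := by
  subst h
  simp [finCongr_refl]

end Reindex

section StemMaps

variable (x : ∀ i : ℕ, (Fin i → ℂ) →ₗ[ℂ] (Fin (i+1) → ℂ))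
  (y : ∀ i : ℕ, (Fin (i+1) → ℂ) →ₗ[ℂ] (Fin i → ℂ))

theorem yChain_succ_funCongrLeft (e : ℕ) :
    ∀ (i : ℕ) (h : i + (e + 1) = (i + 1) + e) (v : Fin ((i + 1) + e) → ℂ),
      yChain y i (e + 1) (LinearEquiv.funCongrLeft ℂ ℂ (finCongr h) v) =
        y i (yChain y (i + 1) e v) := by
  induction e with
  | zero =>
    intro i h v
    simp [yChain, finCongr_refl]
  | succ e ih =>
    intro i h v
    have h' : i + (e + 1) = (i + 1) + e := by omega
    calc yChain y i (e + 2) (LinearEquiv.funCongrLeft ℂ ℂ (finCongr h) v)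
        = yChain y i (e + 1) (LinearEquiv.funCongrLeft ℂ ℂ (finCongr h')
            (y ((i + 1) + e) v)) :=
          congrArg (yChain y i (e + 1)) (funCongrLeft_finCongr_comm_down y h' v)
      _ = y i (yChain y (i + 1) (e + 1) v) := ih i _ _

theorem x_yChain_eq_zero_of_mem_ker (i : ℕ) :
    ∀ d, (∀ j, i ≤ j → j < i + d → (x j).comp (y j) = (y (j+1)).comp (x (j+1))) →
      ∀ v ∈ LinearMap.ker (x (i + d)), x i (yChain y i d v) = 0 := by
  intro d
  induction d with
  | zero => intro _ v hv; exact hv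
  | succ d ih =>
    intro hrel v hv
    have hxv : x (i + d + 1) v = 0 := hv
    have hyv : x (i + d) (y (i + d) v) = 0 := by
      rw [← LinearMap.comp_apply, hrel (i + d) (by omega) (by omega), LinearMap.comp_apply, hxv,
        map_zero]
    exact ih (fun j hij hjd => hrel j hij (by omega)) _ hyv

theorem map_y_map_yChain_ker_le (i e : ℕ) :
    Submodule.map (y i) (Submodule.map (yChain y (i+1) e) (LinearMap.ker (x ((i+1) + e)))) ≤
      Submodule.map (yChain y i (e+1)) (LinearMap.ker (x (i + (e+1)))) := by
  rintro _ ⟨_, ⟨v, hv, rfl⟩, rfl⟩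
  have h : i + (e + 1) = (i + 1) + e := by omega
  refine ⟨LinearEquiv.funCongrLeft ℂ ℂ (finCongr h) v, LinearMap.mem_ker.mpr ?_,
    yChain_succ_funCongrLeft y e i h v⟩
  rw [funCongrLeft_finCongr_comm_up x h, LinearMap.mem_ker.mp hv, map_zero]

end StemMaps

theorem stmt5_general (n : ℕ)
    (x : ∀ i : ℕ, (Fin i → ℂ) →ₗ[ℂ] (Fin (i+1) → ℂ))
    (y : ∀ i : ℕ, (Fin (i+1) → ℂ) →ₗ[ℂ] (Fin i → ℂ))
    (hrel : ∀ j, 1 ≤ j → j ≤ n - 3 → (x j).comp (y j) = (y (j+1)).comp (x (j+1))) :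
    (∀ i d, 1 ≤ i → 1 ≤ d → i + d ≤ n - 2 →
      ∀ v ∈ LinearMap.ker (x (i + d)), x i (yChain y i d v) = 0) ∧
    (∀ i e, 1 ≤ i → (i + 1) + e ≤ n - 2 →
      Submodule.map (y i)
          (Submodule.map (yChain y (i+1) e) (LinearMap.ker (x ((i+1) + e)))) ≤
        Submodule.map (yChain y i (e+1)) (LinearMap.ker (x (i + (e+1))))) :=
  ⟨fun i d hi _ hle => x_yChain_eq_zero_of_mem_ker x y i d
      fun j hij hjd => hrel j (by omega) (by omega),
    fun i e _ _ => map_y_map_yChain_ker_le x y i e⟩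

/-- Let `n ≥ 3` and let `x_i : ℂ^i → ℂ^{i+1}`, `y_i : ℂ^{i+1} → ℂ^i`
(`1 ≤ i ≤ n−2`) satisfy `x_j ∘ y_j = y_{j+1} ∘ x_{j+1}` for `1 ≤ j ≤ n−3`.  Then for
`1 ≤ i < k ≤ n−2` (written `k = i + d`, `d ≥ 1`) the composite `x_i ∘ y_i ∘ ⋯ ∘ y_{k−1}`
vanishes on `ker x_k`; consequently the graded subspace with component `ker x_k` at
vertex `k` and `y_i∘⋯∘y_{k−1}(ker x_k)` at each `i < k` is invariant under the `y`-maps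
(the `x`-maps send each component to `0` by the first assertion). -/
theorem stmt5 (n : ℕ) (hn : 3 ≤ n)
    (x : ∀ i : ℕ, (Fin i → ℂ) →ₗ[ℂ] (Fin (i+1) → ℂ))
    (y : ∀ i : ℕ, (Fin (i+1) → ℂ) →ₗ[ℂ] (Fin i → ℂ))
    (hrel : ∀ j, 1 ≤ j → j ≤ n - 3 → (x j).comp (y j) = (y (j+1)).comp (x (j+1))) :
    (∀ i d, 1 ≤ i → 1 ≤ d → i + d ≤ n - 2 →
      ∀ v ∈ LinearMap.ker (x (i + d)), x i (yChain y i d v) = 0) ∧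
    (∀ i e, 1 ≤ i → (i + 1) + e ≤ n - 2 →
      Submodule.map (y i)
          (Submodule.map (yChain y (i+1) e) (LinearMap.ker (x ((i+1) + e)))) ≤
        Submodule.map (yChain y i (e+1)) (LinearMap.ker (x (i + (e+1))))) :=
  stmt5_general n x y hrel
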